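/- arXiv:2306.06214 — 6 statements merged into one kernel-verified Lean document; each statement's English description precedes it below -/
import Mathlib

section
/- For all m, n ∈ ℕ and all z, w ∈ ℂ, H_{m,n}(z, w) = (−1)^{m+n} · exp(z·w) · D, where D is obtained by first taking the n-th iterated complex derivative of the function z' ↦ exp(−z'·w') in the first variable and then the m-th iterated complex derivative of the result in the second variable, evaluated at (z, w). In particular, specializing to w = conj z gives the Rodrigues formula H_{m,n}(z, conj z) = (−1)^{m+n} e^{|z|²} ∂^{m+n}/∂z̄^m ∂z^n (e^{−|z|²}). -/
/-!
Since `∂_z^n e^{-zw} = (-w)^n e^{-zw}`, the formula reduces to computing `∂_w^m (w^n e^{-zw})`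
by the Leibniz rule: the `k`-th derivative of `w^n` is `n!/(n-k)! · w^{n-k} = k! C(n,k) w^{n-k}`
and the `(m-k)`-th derivative of `e^{-zw}` is `(-z)^{m-k} e^{-zw}`, which produces the `k`-th
term of `H_{m,n}(z,w)` up to the sign `(-1)^{m+n}`. At `w = z̄` one has `z w = |z|²`.
-/

open Complex

/-- The complex Hermite (Itô) polynomial `H_{m,n}(z,w)`. -/
noncomputable def hermiteC (m n : ℕ) (z w : ℂ) : ℂ :=
  ∑ k ∈ Finset.range (min m n + 1),
    (-1 : ℂ) ^ k * (k.factorial : ℂ) * (m.choose k : ℂ) * (n.choose k : ℂ)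
      * z ^ (m - k) * w ^ (n - k)

open Finset

theorem hermiteC_eq_sum_descFactorial (m n : ℕ) (z w : ℂ) :
    hermiteC m n z w = ∑ k ∈ range (m + 1),
      (-1 : ℂ) ^ k * m.choose k * n.descFactorial k * z ^ (m - k) * w ^ (n - k) := by
  rw [hermiteC]
  refine sum_subset (range_subset_range.mpr (by omega)) (fun k hkm hk => ?_) |>.trans
    (sum_congr rfl fun k _ => ?_)
  · simp only [mem_range] at hkm hk
    simp [Nat.choose_eq_zero_of_lt (show n < k by omega)]
  · rw [Nat.descFactorial_eq_factorial_mul_choose]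
    push_cast
    ring

theorem iteratedDeriv_cexp_neg_mul (n : ℕ) (w : ℂ) :
    iteratedDeriv n (fun z => exp (-(z * w))) = fun z => (-w) ^ n * exp (-(z * w)) := by
  have hfun : (fun z => exp (-(z * w))) = fun z => exp (-w * z) := by
    funext z; ring_nf
  rw [hfun, iteratedDeriv_cexp_const_mul]
  funext z; ring_nf

theorem iteratedDeriv_pow_mul_cexp_const_mul (m n : ℕ) (c w : ℂ) :
    iteratedDeriv m (fun w => w ^ n * exp (c * w)) w = ∑ k ∈ range (m + 1),
      m.choose k * n.descFactorial k * w ^ (n - k) * c ^ (m - k) * exp (c * w) := by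
  rw [iteratedDeriv_fun_mul (f := (· ^ n)) (g := fun w => exp (c * w)) (by fun_prop) (by fun_prop)]
  simp only [iteratedDeriv_pow, iteratedDeriv_cexp_const_mul]
  exact sum_congr rfl fun k _ => by ring

theorem iteratedDeriv_neg_pow_mul_cexp_neg_mul (m n : ℕ) (z w : ℂ) :
    iteratedDeriv m (fun w' => (-w') ^ n * exp (-(z * w'))) w =
      (-1) ^ (m + n) * exp (-(z * w)) * hermiteC m n z w := by
  have hfun : (fun w' => (-w') ^ n * exp (-(z * w'))) =
      fun w' => (-1) ^ n * (w' ^ n * exp (-z * w')) := by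
    funext w'; rw [neg_pow, neg_mul]; ring
  rw [hfun, iteratedDeriv_const_mul_field, iteratedDeriv_pow_mul_cexp_const_mul,
    hermiteC_eq_sum_descFactorial, mul_sum, mul_sum]
  refine sum_congr rfl fun k hk => ?_
  obtain ⟨j, rfl⟩ := Nat.exists_eq_add_of_le (Nat.lt_succ_iff.mp (mem_range.mp hk))
  have hsq : ((-1 : ℂ) ^ k) * (-1) ^ k = 1 := by rw [← mul_pow]; simp
  rw [Nat.add_sub_cancel_left, neg_pow z, pow_add, pow_add, neg_mul z w]
  linear_combination (-((-1) ^ n * (-1) ^ j * ((k + j).choose k : ℂ) * n.descFactorial k *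
    w ^ (n - k) * z ^ j * exp (-(z * w)))) * hsq

theorem hermiteC_eq_neg_one_pow_mul_cexp_mul_iteratedDeriv (m n : ℕ) (z w : ℂ) :
    hermiteC m n z w =
      (-1 : ℂ) ^ (m + n) * exp (z * w) *
        iteratedDeriv m (fun w' => iteratedDeriv n (fun z' => exp (-(z' * w'))) z) w := by
  have hsign : ((-1 : ℂ) ^ (m + n)) * (-1) ^ (m + n) = 1 := by rw [← mul_pow]; simp
  have hexp : exp (z * w) * exp (-(z * w)) = 1 := by rw [← exp_add, add_neg_cancel, exp_zero]
  simp only [iteratedDeriv_cexp_neg_mul]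
  rw [iteratedDeriv_neg_pow_mul_cexp_neg_mul]
  linear_combination (-(hermiteC m n z w)) * hsign
    - ((-1) ^ (m + n) * (-1) ^ (m + n) * hermiteC m n z w) * hexp

/-- **Rodrigues formula for the complex Hermite polynomials.**
`H_{m,n}(z,w) = (-1)^{m+n} e^{zw} ∂_w^m ∂_z^n (e^{-zw})`; in particular, at `w = conj z`,
`H_{m,n}(z, z̄) = (-1)^{m+n} e^{|z|²} ∂_{z̄}^m ∂_z^n (e^{-|z|²})`. -/
theorem hermiteC_rodrigues (m n : ℕ) (z w : ℂ) :
    hermiteC m n z w =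
      (-1 : ℂ) ^ (m + n) * Complex.exp (z * w) *
        iteratedDeriv m
          (fun w' => iteratedDeriv n (fun z' => Complex.exp (-(z' * w'))) z) w ∧
    hermiteC m n z (starRingEnd ℂ z) =
      (-1 : ℂ) ^ (m + n) * Complex.exp (((‖z‖ : ℝ) : ℂ) ^ 2) *
        iteratedDeriv m
          (fun w' => iteratedDeriv n (fun z' => Complex.exp (-(z' * w'))) z)
          (starRingEnd ℂ z) := by
  refine ⟨hermiteC_eq_neg_one_pow_mul_cexp_mul_iteratedDeriv m n z w, ?_⟩
  rw [← mul_conj']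
  exact hermiteC_eq_neg_one_pow_mul_cexp_mul_iteratedDeriv m n z (starRingEnd ℂ z)
end

section
/- For all z, w, u, v ∈ ℂ, the double series Σ_{m=0}^∞ Σ_{n=0}^∞ H_{m,n}(z, w) · u^m v^n / (m! n!) converges (as a sum over ℕ × ℕ) and equals exp(u·z + v·w − u·v). In particular, taking w = conj z, u arbitrary and v = conj u gives Σ_{m,n} H_{m,n}(z, conj z) u^m (conj u)^n/(m! n!) = exp(u z + conj(u z) − |u|²). -/
open Complex

/-!
`exp (u z + v w - u v) = exp (u z) · exp (v w) · exp (-u v)`, and the Cauchy product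
of the three exponential series converges absolutely. Grouping its terms `(i, j, k)` according to
`(m, n) = (i + k, j + k)` collects exactly the coefficient `H_{m,n}(z, w) / (m! n!)` of `u^m v^n`.
-/

theorem HasSum.mul₃_of_summable_norm {ι κ μ R : Type*} [NormedRing R] [CompleteSpace R]
    {f : ι → R} {g : κ → R} {h : μ → R} {a b c : R}
    (hf : HasSum f a) (hg : HasSum g b) (hh : HasSum h c) (hf' : Summable fun i => ‖f i‖)
    (hg' : Summable fun j => ‖g j‖) (hh' : Summable fun k => ‖h k‖) :
    HasSum (fun q : ι × κ × μ => f q.1 * (g q.2.1 * h q.2.2)) (a * (b * c)) := by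
  have hgh := hg.mul hh (summable_mul_of_summable_norm hg' hh')
  have hfgh := summable_mul_of_summable_norm hf' (hg'.mul_norm hh')
  -- Without the ascription, unifying with the goal loops on `?g x.2 =?= g q.2.1 * h q.2.2`.
  exact (hf.mul hgh hfgh :)

noncomputable def expSeriesProd₃ (a b c : ℂ) (q : ℕ × ℕ × ℕ) : ℂ :=
  a ^ q.1 / q.1.factorial * (b ^ q.2.1 / q.2.1.factorial * (c ^ q.2.2 / q.2.2.factorial))

theorem hasSum_expSeriesProd₃ (a b c : ℂ) :
    HasSum (expSeriesProd₃ a b c) (exp (a + b + c)) := by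
  have hexp (x : ℂ) : HasSum (fun n : ℕ => x ^ n / n.factorial) (exp x) := by
    simpa [exp_eq_exp_ℂ] using NormedSpace.expSeries_div_hasSum_exp x
  have hnorm (x : ℂ) : Summable fun n : ℕ => ‖x ^ n / n.factorial‖ :=
    NormedSpace.norm_expSeries_div_summable x
  have habc := (hexp a).mul₃_of_summable_norm (hexp b) (hexp c) (hnorm a) (hnorm b) (hnorm c)
  rw [add_assoc, exp_add, exp_add]
  exact habc

def sigmaFinMinSuccEquiv : (Σ p : ℕ × ℕ, Fin (min p.1 p.2 + 1)) ≃ ℕ × ℕ × ℕ where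
  toFun x := (x.1.1 - x.2, x.1.2 - x.2, x.2)
  invFun y := ⟨(y.1 + y.2.2, y.2.1 + y.2.2), ⟨y.2.2, by omega⟩⟩
  left_inv := by
    rintro ⟨⟨m, n⟩, ⟨k, hk⟩⟩
    have hm : m - k + k = m := by omega
    have hn : n - k + k = n := by omega
    exact Sigma.ext (by simp [hm, hn]) ((Fin.heq_ext_iff (by simp [hm, hn])).2 rfl)
  right_inv := by rintro ⟨i, j, k⟩; simp

theorem expSeriesProd₃_eq_hermiteC_summand (z w u v : ℂ) {m n k : ℕ} (hkm : k ≤ m)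
    (hkn : k ≤ n) :
    expSeriesProd₃ (u * z) (v * w) (-(u * v)) (m - k, n - k, k) =
      (-1 : ℂ) ^ k * (k.factorial : ℂ) * (m.choose k : ℂ) * (n.choose k : ℂ)
        * z ^ (m - k) * w ^ (n - k) * u ^ m * v ^ n / ((m.factorial : ℂ) * n.factorial) := by
  have hu : u ^ m = u ^ (m - k) * u ^ k := by rw [← pow_add, Nat.sub_add_cancel hkm]
  have hv : v ^ n = v ^ (n - k) * v ^ k := by rw [← pow_add, Nat.sub_add_cancel hkn]
  have hm := Nat.cast_ne_zero (R := ℂ).2 m.factorial_ne_zero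
  have hn := Nat.cast_ne_zero (R := ℂ).2 n.factorial_ne_zero
  rw [expSeriesProd₃, Nat.cast_choose ℂ hkm, Nat.cast_choose ℂ hkn, hu, hv]
  field_simp
  ring

theorem sum_expSeriesProd₃_fiber (z w u v : ℂ) (m n : ℕ) :
    ∑ k : Fin (min m n + 1), expSeriesProd₃ (u * z) (v * w) (-(u * v)) (m - k, n - k, k) =
      hermiteC m n z w * u ^ m * v ^ n / ((m.factorial : ℂ) * n.factorial) := by
  rw [Fin.sum_univ_eq_sum_range
      (fun k => expSeriesProd₃ (u * z) (v * w) (-(u * v)) (m - k, n - k, k)),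
    hermiteC, Finset.sum_mul, Finset.sum_mul, Finset.sum_div]
  refine Finset.sum_congr rfl fun k hk => ?_
  rw [Finset.mem_range] at hk
  exact expSeriesProd₃_eq_hermiteC_summand z w u v (by omega) (by omega)

theorem hasSum_hermiteC_mul_pow_div_factorial (z w u v : ℂ) :
    HasSum
      (fun p : ℕ × ℕ =>
        hermiteC p.1 p.2 z w * u ^ p.1 * v ^ p.2 / ((p.1.factorial : ℂ) * (p.2.factorial : ℂ)))
      (exp (u * z + v * w - u * v)) := by
  have h := sigmaFinMinSuccEquiv.hasSum_iff.2 (hasSum_expSeriesProd₃ (u * z) (v * w) (-(u * v)))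
  rw [← sub_eq_add_neg] at h
  refine h.sigma fun p => ?_
  have hfiber := hasSum_fintype fun k : Fin (min p.1 p.2 + 1) =>
    expSeriesProd₃ (u * z) (v * w) (-(u * v)) (p.1 - k, p.2 - k, k)
  rwa [sum_expSeriesProd₃_fiber] at hfiber

/-- **Generating function of the complex Hermite polynomials.**
`∑_{m,n} H_{m,n}(z,w) u^m v^n/(m! n!) = e^{uz + vw - uv}`, and, in particular, with
`w = conj z`, `v = conj u`: `∑ H_{m,n}(z,z̄) u^m ū^n/(m! n!) = e^{uz + conj(uz) - |u|²}`. -/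
theorem hermiteC_generating_function (z w u v : ℂ) :
    HasSum
      (fun p : ℕ × ℕ =>
        hermiteC p.1 p.2 z w * u ^ p.1 * v ^ p.2 / ((p.1.factorial : ℂ) * (p.2.factorial : ℂ)))
      (Complex.exp (u * z + v * w - u * v)) ∧
    HasSum
      (fun p : ℕ × ℕ =>
        hermiteC p.1 p.2 z (starRingEnd ℂ z) * u ^ p.1 * (starRingEnd ℂ u) ^ p.2 /
          ((p.1.factorial : ℂ) * (p.2.factorial : ℂ)))
      (Complex.exp (u * z + starRingEnd ℂ (u * z) - ((‖u‖ : ℝ) : ℂ) ^ 2)) := by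
  refine ⟨hasSum_hermiteC_mul_pow_div_factorial z w u v, ?_⟩
  have hexponent : u * z + starRingEnd ℂ u * starRingEnd ℂ z - u * starRingEnd ℂ u
      = u * z + starRingEnd ℂ (u * z) - ((‖u‖ : ℝ) : ℂ) ^ 2 := by
    rw [map_mul, mul_conj, normSq_eq_norm_sq, ofReal_pow]
  rw [← hexponent]
  exact hasSum_hermiteC_mul_pow_div_factorial z (starRingEnd ℂ z) u (starRingEnd ℂ u)
end

section
/- The complex Hermite polynomials are eigenfunctions of the Landau operator: for all m, n ∈ ℕ and all z, w ∈ ℂ, −(∂_z ∂_w H_{m,n})(z, w) + w · (∂_w H_{m,n})(z, w) = n · H_{m,n}(z, w), where ∂_z and ∂_w denote the complex derivatives of H_{m,n}(z, w) in the first and second variable respectively. (At w = conj z this is the identity 𝒢 H_{m,n}(z, z̄) = n H_{m,n}(z, z̄) for the Landau operator 𝒢 = −∂²/∂z̄∂z + z̄ ∂/∂z̄.) -/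
/-!
The Hermite polynomials form an Appell-type family in each variable,
`∂_w H_{m,n} = n H_{m,n-1}` and `∂_z H_{m,n} = m H_{m-1,n}`, and satisfy the three-term
recurrence `H_{m,n+1} = w H_{m,n} - m H_{m-1,n}` (Pascal's rule on `C(n+1,k)`). Hence
`-∂_z ∂_w H_{m,n} + w ∂_w H_{m,n} = n (w H_{m,n-1} - m H_{m-1,n-1}) = n H_{m,n}`.
The truncated `m - 1`, `n - 1` at `0` are harmless: they always come multiplied by `m`, `n`.
-/

open Complex

open Finset

theorem Nat.sub_mul_choose_eq (n k : ℕ) : (n - k) * n.choose k = n * (n - 1).choose k := by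
  cases n with
  | zero => simp
  | succ n => rw [Nat.add_sub_cancel, mul_comm, ← Nat.choose_mul_succ_eq, mul_comm]

theorem Nat.mul_choose_sub_one_eq (n k : ℕ) :
    n * (n - 1).choose k = n.choose (k + 1) * (k + 1) := by
  cases n with
  | zero => simp
  | succ n => rw [Nat.add_sub_cancel, Nat.add_one_mul_choose_eq]

theorem hermiteC_eq_sum_range {m n N : ℕ} (h : min m n < N) (z w : ℂ) :
    hermiteC m n z w = ∑ k ∈ range N,
      (-1 : ℂ) ^ k * (k.factorial : ℂ) * (m.choose k : ℂ) * (n.choose k : ℂ)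
        * z ^ (m - k) * w ^ (n - k) := by
  refine sum_subset (range_subset_range.2 h) fun k _ hk => ?_
  rcases lt_or_ge m k with hmk | hkm
  · simp [Nat.choose_eq_zero_of_lt hmk]
  · have hnk : n < k := by simp at hk; omega
    simp [Nat.choose_eq_zero_of_lt hnk]

theorem hermiteC_comm (m n : ℕ) (z w : ℂ) : hermiteC m n z w = hermiteC n m w z := by
  unfold hermiteC
  rw [min_comm]
  exact sum_congr rfl fun k _ => by ring

theorem hasDerivAt_hermiteC_snd (m n : ℕ) (z w : ℂ) :
    HasDerivAt (fun w => hermiteC m n z w) (n * hermiteC m (n - 1) z w) w := by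
  have hsum := funext fun w => hermiteC_eq_sum_range (m := m) (n := n) (N := n + 1) (by omega) z w
  rw [hsum, hermiteC_eq_sum_range (N := n + 1) (by omega), mul_sum]
  refine HasDerivAt.fun_sum fun k _ => ?_
  refine ((hasDerivAt_pow (n - k) w).const_mul _).congr_deriv ?_
  have hchoose : ((n - k : ℕ) : ℂ) * n.choose k = n * (n - 1).choose k := by
    exact_mod_cast Nat.sub_mul_choose_eq n k
  rw [Nat.sub_right_comm n 1 k]
  linear_combination
    (-1 : ℂ) ^ k * k.factorial * m.choose k * z ^ (m - k) * w ^ (n - k - 1) * hchoose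

theorem hasDerivAt_hermiteC_fst (m n : ℕ) (z w : ℂ) :
    HasDerivAt (fun z => hermiteC m n z w) (m * hermiteC (m - 1) n z w) z := by
  simpa only [hermiteC_comm _ n] using hasDerivAt_hermiteC_snd n m w z

theorem hermiteC_succ_right (m n : ℕ) (z w : ℂ) :
    hermiteC m (n + 1) z w = w * hermiteC m n z w - m * hermiteC (m - 1) n z w := by
  rw [hermiteC_eq_sum_range (N := n + 2) (by omega), hermiteC_eq_sum_range (N := n + 2) (by omega),
    hermiteC_eq_sum_range (N := n + 1) (by omega), mul_sum, mul_sum, sum_range_succ',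
    sum_range_succ' _ (n + 1), ← sub_add_eq_add_sub, ← sum_sub_distrib]
  -- term `j` of `m H_{m-1,n}` matches the `C(n,j)` half of term `j+1` of `H_{m,n+1}`
  congr 1
  · refine sum_congr rfl fun j _ => ?_
    have hpascal : (n + 1).choose (j + 1) = n.choose j + n.choose (j + 1) :=
      Nat.choose_succ_succ n j
    have hm : (m : ℂ) * (m - 1).choose j = m.choose (j + 1) * (j + 1) := by
      exact_mod_cast Nat.mul_choose_sub_one_eq m j
    have hw : w * (n.choose (j + 1) * w ^ (n - (j + 1))) = n.choose (j + 1) * w ^ (n - j) := by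
      rcases lt_or_ge j n with hjn | hnj
      · rw [mul_left_comm, ← pow_succ']
        congr 2
        omega
      · simp [Nat.choose_eq_zero_of_lt (by omega : n < j + 1)]
    rw [Nat.sub_right_comm, Nat.add_sub_add_right, Nat.factorial_succ]
    push_cast [hpascal]
    linear_combination
      (-1 : ℂ) ^ j * j.factorial * (j + 1) * m.choose (j + 1) * z ^ (m - (j + 1)) * hw
        + (-1 : ℂ) ^ j * j.factorial * n.choose j * z ^ (m - (j + 1)) * w ^ (n - j) * hm
  · simp only [pow_zero, Nat.factorial_zero, Nat.choose_zero_right, Nat.sub_zero]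
    ring

/-- **Complex Hermite polynomials are eigenfunctions of the Landau operator:**
`-∂_z ∂_w H_{m,n}(z,w) + w ∂_w H_{m,n}(z,w) = n H_{m,n}(z,w)`.
(At `w = conj z` this is `𝒢 H_{m,n}(z,z̄) = n H_{m,n}(z,z̄)` for
`𝒢 = -∂²/∂z̄∂z + z̄ ∂/∂z̄`.) -/
theorem hermiteC_landau_eigenfunction (m n : ℕ) (z w : ℂ) :
    -(deriv (fun z' => deriv (fun w' => hermiteC m n z' w') w) z) +
        w * deriv (fun w' => hermiteC m n z w') w =
      (n : ℂ) * hermiteC m n z w := by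
  have hsnd : ∀ z', deriv (fun w' => hermiteC m n z' w') w = n * hermiteC m (n - 1) z' w :=
    fun z' => (hasDerivAt_hermiteC_snd m n z' w).deriv
  simp only [hsnd, deriv_const_mul_field', (hasDerivAt_hermiteC_fst m (n - 1) z w).deriv]
  cases n with
  | zero => simp
  | succ n =>
    rw [Nat.add_sub_cancel, hermiteC_succ_right]
    ring
end

section
/- Appell property for bicomplex Hermite polynomials: fix m ≥ 1, n ∈ ℕ and W ∈ ℂ × ℂ. The map Z ↦ 𝐇_{m,n}(Z, W) from ℂ × ℂ to ℂ × ℂ is complex Fréchet differentiable at every Z, with derivative equal to the linear map T ↦ m · 𝐇_{m−1,n}(Z, W) · T (multiplication by m 𝐇_{m−1,n}(Z, W) in the algebra ℂ × ℂ). Similarly, for n ≥ 1 and fixed Z, the map W ↦ 𝐇_{m,n}(Z, W) is differentiable with derivative T ↦ n · 𝐇_{m,n−1}(Z, W) · T. -/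
/-!
Each summand of `𝐇_{m,n}(Z,W)` is a scalar multiple of the monomial `Z^(m-k) W^(n-k)` of the
commutative Banach algebra `ℂ × ℂ`, whose derivative in `Z` is multiplication by
`(m-k) Z^(m-k-1) W^(n-k)`. The absorption identity `C(m,k) (m-k) = m C(m-1,k)` turns the
differentiated sum, term by term, into `m 𝐇_{m-1,n}(Z,W)`. The statement in `W` follows from the
symmetry `𝐇_{m,n}(Z,W) = 𝐇_{n,m}(W,Z)`.
-/

open Complex

/-- The bicomplex Hermite polynomial of the first kind `𝐇_{m,n}(Z,W)`, computed in the
bicomplex algebra `ℂ × ℂ` (idempotent representation, componentwise operations). -/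
noncomputable def hermiteBC (m n : ℕ) (Z W : ℂ × ℂ) : ℂ × ℂ :=
  ∑ k ∈ Finset.range (min m n + 1),
    ((-1 : ℂ) ^ k * (k.factorial : ℂ) * (m.choose k : ℂ) * (n.choose k : ℂ)) •
      (Z ^ (m - k) * W ^ (n - k))

open Finset

section MonomialDerivative

variable {𝕜 𝔸 : Type*} [NontriviallyNormedField 𝕜] [NormedCommRing 𝔸] [NormedAlgebra 𝕜 𝔸]

theorem hasFDerivAt_pow_mul_const (p : ℕ) (w x : 𝔸) :
    HasFDerivAt (fun y : 𝔸 => y ^ p * w)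
      (ContinuousLinearMap.mul 𝕜 𝔸 ((p : 𝕜) • (x ^ (p - 1) * w))) x := by
  refine ((hasFDerivAt_pow p).mul_const w).congr_fderiv (ContinuousLinearMap.ext fun t => ?_)
  simp only [nsmul_eq_mul, smul_apply, ContinuousLinearMap.id_apply, smul_eq_mul,
    Nat.cast_smul_eq_nsmul, ContinuousLinearMap.mul_apply']
  ring

theorem hasFDerivAt_sum_smul_pow_mul {ι : Type*} (s : Finset ι) (c : ι → 𝕜) (e : ι → ℕ)
    (w : ι → 𝔸) (x : 𝔸) :
    HasFDerivAt (fun y : 𝔸 => ∑ i ∈ s, c i • (y ^ e i * w i))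
      (ContinuousLinearMap.mul 𝕜 𝔸 (∑ i ∈ s, c i • (e i : 𝕜) • (x ^ (e i - 1) * w i))) x := by
  rw [map_sum]
  refine HasFDerivAt.fun_sum fun i _ => ?_
  rw [map_smul]
  exact (hasFDerivAt_pow_mul_const (e i) (w i) x).const_smul (c i)

end MonomialDerivative

theorem hermiteBC_eq_sum_range {m n N : ℕ} (hN : min m n < N) (Z W : ℂ × ℂ) :
    hermiteBC m n Z W = ∑ k ∈ range N,
      ((-1 : ℂ) ^ k * (k.factorial : ℂ) * (m.choose k : ℂ) * (n.choose k : ℂ)) •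
        (Z ^ (m - k) * W ^ (n - k)) := by
  refine sum_subset (range_subset_range.2 hN) fun k _ hk => ?_
  rw [mem_range, Nat.lt_succ_iff, le_min_iff, not_and_or, not_le, not_le] at hk
  rcases hk with hm | hn <;> simp [Nat.choose_eq_zero_of_lt, *]

theorem hermiteBC_comm (m n : ℕ) (Z W : ℂ × ℂ) : hermiteBC m n Z W = hermiteBC n m W Z := by
  rw [hermiteBC, hermiteBC, min_comm]
  refine sum_congr rfl fun k _ => ?_
  rw [mul_comm (Z ^ _)]
  congr 1
  ring

theorem hasFDerivAt_hermiteBC_fst (m n : ℕ) (Z W : ℂ × ℂ) :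
    HasFDerivAt (fun Z' => hermiteBC (m + 1) n Z' W)
      (ContinuousLinearMap.mul ℂ (ℂ × ℂ) (((m + 1 : ℕ) : ℂ) • hermiteBC m n Z W)) Z := by
  have hterm : ∀ k, ((-1 : ℂ) ^ k * k.factorial * (m + 1).choose k * n.choose k) •
        ((m + 1 - k : ℕ) : ℂ) • (Z ^ (m + 1 - k - 1) * W ^ (n - k)) =
      ((m + 1 : ℕ) : ℂ) • ((-1 : ℂ) ^ k * k.factorial * m.choose k * n.choose k) •
        (Z ^ (m - k) * W ^ (n - k)) := fun k => by
    have hchoose : ((m.choose k * (m + 1) : ℕ) : ℂ) = ((m + 1).choose k * (m + 1 - k) : ℕ) :=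
      congrArg _ (Nat.choose_mul_succ_eq m k)
    rw [Nat.sub_right_comm, Nat.add_sub_cancel, smul_smul, smul_smul]
    congr 1
    push_cast at hchoose ⊢
    linear_combination -((-1 : ℂ) ^ k * k.factorial * n.choose k) * hchoose
  -- Over `range (m + 2)` both sums share one index set; the term `k = m + 1` vanishes on both sides.
  have hsum : ∀ a ≤ m + 1, ∀ Z', hermiteBC a n Z' W = _ := fun a ha Z' =>
    hermiteBC_eq_sum_range (N := m + 2) (by omega) Z' W
  simp only [hsum m (by omega), hsum (m + 1) le_rfl, smul_sum, ← hterm]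
  exact hasFDerivAt_sum_smul_pow_mul _ _ (fun k => m + 1 - k) _ Z

theorem hasFDerivAt_hermiteBC_snd (m n : ℕ) (Z W : ℂ × ℂ) :
    HasFDerivAt (fun W' => hermiteBC m (n + 1) Z W')
      (ContinuousLinearMap.mul ℂ (ℂ × ℂ) (((n + 1 : ℕ) : ℂ) • hermiteBC m n Z W)) W := by
  simpa only [hermiteBC_comm m] using hasFDerivAt_hermiteBC_fst n m W Z

/-- **Appell property of the bicomplex Hermite polynomials:** for `m ≥ 1` the map
`Z ↦ 𝐇_{m,n}(Z,W)` is complex Fréchet differentiable, with derivative the multiplication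
map `T ↦ m 𝐇_{m-1,n}(Z,W) ⬝ T` in the algebra `ℂ × ℂ`; similarly in the second variable
for `n ≥ 1`. -/
theorem hermiteBC_appell (m n : ℕ) (Z W : ℂ × ℂ) :
    (1 ≤ m →
      HasFDerivAt (fun Z' => hermiteBC m n Z' W)
        (ContinuousLinearMap.mul ℂ (ℂ × ℂ) ((m : ℂ) • hermiteBC (m - 1) n Z W)) Z) ∧
    (1 ≤ n →
      HasFDerivAt (fun W' => hermiteBC m n Z W')
        (ContinuousLinearMap.mul ℂ (ℂ × ℂ) ((n : ℂ) • hermiteBC m (n - 1) Z W)) W) := by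
  refine ⟨fun hm => ?_, fun hn => ?_⟩
  · obtain ⟨m, rfl⟩ := Nat.exists_eq_add_of_le' hm
    exact hasFDerivAt_hermiteBC_fst m n Z W
  · obtain ⟨n, rfl⟩ := Nat.exists_eq_add_of_le' hn
    exact hasFDerivAt_hermiteBC_snd m n Z W
end

section
/- Generating function for the bicomplex Hermite polynomials (star version): for all U, V, Z ∈ ℂ × ℂ, the double series Σ_{m=0}^∞ Σ_{n=0}^∞ 𝐇_{m,n}(Z, Z*) · U^m · V^n / (m! n!) converges (as a sum over ℕ × ℕ in the Banach algebra ℂ × ℂ) and equals exp(U·Z + V·Z* − U·V). -/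
/-!
In each idempotent component the right-hand side factors as `e^{uz} e^{vw} e^{-uv}`. Multiplying
out the three exponential series gives an absolutely convergent triple sum over `((a, b), k)`;
regrouping it along `m = a + k`, `n = b + k` collects exactly the terms of
`H_{m,n}(z, w) u^m v^n / (m! n!)`, because `k! C(m,k) C(n,k) / (m! n!) = 1 / (k! (m-k)! (n-k)!)`.
-/

open Complex

/-- The bicomplex exponential: the componentwise complex exponential on `ℂ × ℂ`. -/
noncomputable def bcExp (Z : ℂ × ℂ) : ℂ × ℂ := (Complex.exp Z.1, Complex.exp Z.2)

open scoped Nat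

theorem HasSum.mul_of_summable_norm {ι ι' R : Type*} [NormedRing R] [CompleteSpace R]
    {f : ι → R} {g : ι' → R} {s t : R} (hf : HasSum f s) (hg : HasSum g t)
    (hf' : Summable fun i => ‖f i‖) (hg' : Summable fun j => ‖g j‖) :
    HasSum (fun x : ι × ι' => f x.1 * g x.2) (s * t) :=
  hf.mul hg (summable_mul_of_summable_norm hf' hg')

theorem hasSum_exp_mul_exp_mul_exp {𝔸 : Type*} [NormedDivisionRing 𝔸]
    [NormedAlgebra ℚ 𝔸] [CompleteSpace 𝔸] (x y t : 𝔸) :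
    HasSum (fun q : (ℕ × ℕ) × ℕ =>
        (x ^ q.1.1 / q.1.1 ! : 𝔸) * (y ^ q.1.2 / q.1.2 !) * (t ^ q.2 / q.2 !))
      (NormedSpace.exp x * NormedSpace.exp y * NormedSpace.exp t) := by
  have hasSum_exp (x : 𝔸) : HasSum (fun n : ℕ => x ^ n / n !) (NormedSpace.exp x) :=
    NormedSpace.expSeries_div_hasSum_exp x
  have summable_norm (x : 𝔸) : Summable (fun n : ℕ => ‖(x ^ n / n ! : 𝔸)‖) :=
    NormedSpace.norm_expSeries_div_summable x
  -- The factors are passed explicitly: left to higher-order unification (against the goal or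
  -- against `‖f i‖`), elaboration times out.
  have hxy := (hasSum_exp x).mul_of_summable_norm (hasSum_exp y) (summable_norm x)
    (summable_norm y)
  have hxyt := hxy.mul_of_summable_norm (hasSum_exp t)
    (Summable.mul_norm (f := fun n : ℕ => x ^ n / n !) (g := fun n : ℕ => y ^ n / n !)
      (summable_norm x) (summable_norm y))
    (summable_norm t)
  exact hxyt

theorem HasSum.reindex_sub_diag {α : Type*} [AddCommMonoid α] [TopologicalSpace α]
    {f : (ℕ × ℕ) × ℕ → α} {a : α} (hf : HasSum f a) :
    HasSum (fun q : (ℕ × ℕ) × ℕ =>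
      if q.2 ≤ q.1.1 ∧ q.2 ≤ q.1.2 then f ((q.1.1 - q.2, q.1.2 - q.2), q.2) else 0) a := by
  set shift : (ℕ × ℕ) × ℕ → (ℕ × ℕ) × ℕ := fun q => ((q.1.1 + q.2, q.1.2 + q.2), q.2)
  have shift_inj : shift.Injective := by
    rintro ⟨⟨a, b⟩, k⟩ ⟨⟨a', b'⟩, k'⟩ h
    simp only [shift, Prod.mk.injEq] at h
    grind
  refine (shift_inj.hasSum_iff ?_).mp ?_
  · rintro ⟨⟨m, n⟩, k⟩ hq
    refine if_neg fun ⟨hkm, hkn⟩ => hq ⟨((m - k, n - k), k), ?_⟩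
    simp [shift, Nat.sub_add_cancel hkm, Nat.sub_add_cancel hkn]
  · refine hf.congr_fun fun q => ?_
    simp [shift]

noncomputable def complexHermite (m n : ℕ) (z w : ℂ) : ℂ :=
  ∑ k ∈ Finset.range (min m n + 1),
    (-1 : ℂ) ^ k * k ! * m.choose k * n.choose k * (z ^ (m - k) * w ^ (n - k))

@[simp]
theorem hermiteBC_fst (m n : ℕ) (Z W : ℂ × ℂ) :
    (hermiteBC m n Z W).1 = complexHermite m n Z.1 W.1 := by
  simp [hermiteBC, complexHermite, Prod.fst_sum]

@[simp]
theorem hermiteBC_snd (m n : ℕ) (Z W : ℂ × ℂ) :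
    (hermiteBC m n Z W).2 = complexHermite m n Z.2 W.2 := by
  simp [hermiteBC, complexHermite, Prod.snd_sum]

theorem complexHermite_term_eq {m n k : ℕ} (hkm : k ≤ m) (hkn : k ≤ n) (u v z w : ℂ) :
    (u * z) ^ (m - k) / (m - k)! * ((v * w) ^ (n - k) / (n - k)!) * ((-(u * v)) ^ k / k !) =
      ((m ! : ℂ) * n !)⁻¹ *
        ((-1 : ℂ) ^ k * k ! * m.choose k * n.choose k * (z ^ (m - k) * w ^ (n - k)) *
          u ^ m * v ^ n) := by
  obtain ⟨a, rfl⟩ := Nat.exists_eq_add_of_le' hkm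
  obtain ⟨b, rfl⟩ := Nat.exists_eq_add_of_le' hkn
  rw [Nat.cast_choose ℂ hkm, Nat.cast_choose ℂ hkn]
  have hfa : ((a + k)! : ℂ) ≠ 0 := mod_cast (a + k).factorial_ne_zero
  have hfb : ((b + k)! : ℂ) ≠ 0 := mod_cast (b + k).factorial_ne_zero
  simp only [Nat.add_sub_cancel]
  field_simp
  ring

theorem hasSum_complexHermite (u v z w : ℂ) :
    HasSum (fun p : ℕ × ℕ =>
        ((p.1 ! : ℂ) * p.2 !)⁻¹ * (complexHermite p.1 p.2 z w * u ^ p.1 * v ^ p.2))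
      (exp (u * z + v * w - u * v)) := by
  have hexp : exp (u * z + v * w - u * v) = exp (u * z) * exp (v * w) * exp (-(u * v)) := by
    rw [← Complex.exp_add, ← Complex.exp_add, sub_eq_add_neg]
  rw [hexp, Complex.exp_eq_exp_ℂ]
  refine (hasSum_exp_mul_exp_mul_exp _ _ _).reindex_sub_diag.prod_fiberwise
    fun p => ?_
  obtain ⟨m, n⟩ := p
  convert hasSum_sum_of_ne_finset_zero (L := SummationFilter.unconditional ℕ)
    (s := Finset.range (min m n + 1)) fun k hk => if_neg ?_ using 1
  · rw [complexHermite, Finset.sum_mul, Finset.sum_mul, Finset.mul_sum]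
    refine Finset.sum_congr rfl fun k hk => ?_
    have hk' : k ≤ m ∧ k ≤ n := by simpa [Nat.lt_succ_iff] using hk
    rw [if_pos hk', complexHermite_term_eq hk'.1 hk'.2]
  · simpa [Nat.lt_succ_iff] using hk

theorem hasSum_hermiteBC (U V Z W : ℂ × ℂ) :
    HasSum (fun p : ℕ × ℕ =>
        ((p.1 ! : ℂ) * p.2 !)⁻¹ • (hermiteBC p.1 p.2 Z W * U ^ p.1 * V ^ p.2))
      (bcExp (U * Z + V * W - U * V)) := by
  refine ((hasSum_complexHermite U.1 V.1 Z.1 W.1).prodMk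
    (hasSum_complexHermite U.2 V.2 Z.2 W.2)).congr_fun fun p => ?_
  ext <;> simp

/-- **Generating function for the bicomplex Hermite polynomials (star version):**
`∑_{m,n} 𝐇_{m,n}(Z,Z*) U^m V^n/(m! n!) = exp(UZ + VZ* - UV)` in the bicomplex algebra
`ℂ × ℂ`, where `Z* = star Z` is the componentwise conjugate. -/
theorem hermiteBC_generating_star (U V Z : ℂ × ℂ) :
    HasSum
      (fun p : ℕ × ℕ =>
        ((p.1.factorial : ℂ) * (p.2.factorial : ℂ))⁻¹ •
          (hermiteBC p.1 p.2 Z (star Z) * U ^ p.1 * V ^ p.2))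
      (bcExp (U * Z + V * star Z - U * V)) :=
  hasSum_hermiteBC U V Z (star Z)
end

section
/- Mixed iterated derivatives of the quartic Gaussian symbol: let p ≤ q be natural numbers and z₁, z₂, z₃, z₄ ∈ ℂ. Then the p-th iterated complex derivative in the variable z₃ of the q-th iterated complex derivative in the variable z₄ of the function (z₃, z₄) ↦ exp(−z₁ z₂ z₃ z₄) equals (−1)^q Σ_{ℓ=0}^{p} (−1)^ℓ C(p, ℓ) · (q! / (q − p + ℓ)!) · z₁^{q+ℓ} z₂^{q+ℓ} z₃^{q−p+ℓ} z₄^{ℓ} · exp(−z₁ z₂ z₃ z₄). -/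
/-!
The inner derivative is explicit: `∂_{z₄}^q exp(-z₁z₂z₃z₄) = (-z₁z₂z₃)^q exp(-z₁z₂z₃z₄)`.
As a function of `z₃` this is a constant times `exp(a z₃) z₃^q` with `a = -z₁z₂z₄`, and the
Leibniz rule gives its `p`-th derivative, the `ℓ`-th term taking `ℓ` derivatives of the exponential
and `p - ℓ` of the power, which yields the factor `q!/(q - p + ℓ)!`.
-/

open Complex

theorem Nat.cast_descFactorial_eq_factorial_div {K : Type*} [DivisionRing K] [CharZero K]
    {n k : ℕ} (h : k ≤ n) : (n.descFactorial k : K) = n.factorial / (n - k).factorial := by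
  rw [eq_div_iff (by exact_mod_cast (n - k).factorial_ne_zero), ← Nat.cast_mul, mul_comm,
    Nat.factorial_mul_descFactorial h]

theorem iteratedDeriv_cexp_const_mul_mul_pow (a : ℂ) (n k : ℕ) (z : ℂ) :
    iteratedDeriv k (fun w => exp (a * w) * w ^ n) z =
      ∑ i ∈ Finset.range (k + 1),
        k.choose i * a ^ i * n.descFactorial (k - i) * z ^ (n - (k - i)) * exp (a * z) := by
  rw [iteratedDeriv_fun_mul (by fun_prop) (by fun_prop)]
  refine Finset.sum_congr rfl fun i _ => ?_
  simp only [iteratedDeriv_cexp_const_mul, iteratedDeriv_pow]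
  ring

/-- **Mixed iterated derivatives of the quartic Gaussian symbol:** for `p ≤ q`,
`∂_{z₃}^p ∂_{z₄}^q exp(-z₁z₂z₃z₄)
  = (-1)^q ∑_{ℓ=0}^{p} (-1)^ℓ C(p,ℓ) (q!/(q-p+ℓ)!) z₁^{q+ℓ} z₂^{q+ℓ} z₃^{q-p+ℓ} z₄^ℓ
      exp(-z₁z₂z₃z₄)`. -/
theorem iteratedDeriv_quartic_gaussian (p q : ℕ) (hpq : p ≤ q) (z₁ z₂ z₃ z₄ : ℂ) :
    iteratedDeriv p
        (fun w₃ => iteratedDeriv q (fun w₄ => Complex.exp (-(z₁ * z₂ * w₃ * w₄))) z₄) z₃ =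
      (-1 : ℂ) ^ q *
        ∑ ℓ ∈ Finset.range (p + 1),
          (-1 : ℂ) ^ ℓ * (p.choose ℓ : ℂ) *
            ((q.factorial : ℂ) / ((q - p + ℓ).factorial : ℂ)) *
            z₁ ^ (q + ℓ) * z₂ ^ (q + ℓ) * z₃ ^ (q - p + ℓ) * z₄ ^ ℓ *
            Complex.exp (-(z₁ * z₂ * z₃ * z₄)) := by
  have inner : ∀ w₃, iteratedDeriv q (fun w₄ => exp (-(z₁ * z₂ * w₃ * w₄))) z₄ =
      (-1) ^ q * z₁ ^ q * z₂ ^ q * (exp (-(z₁ * z₂ * z₄) * w₃) * w₃ ^ q) := by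
    intro w₃
    simp_rw [show ∀ w₄, -(z₁ * z₂ * w₃ * w₄) = -(z₁ * z₂ * w₃) * w₄ by intro; ring,
      iteratedDeriv_cexp_const_mul]
    ring_nf
  simp only [inner, iteratedDeriv_const_mul_field, iteratedDeriv_cexp_const_mul_mul_pow,
    Finset.mul_sum]
  refine Finset.sum_congr rfl fun ℓ hℓ => ?_
  have hℓp : ℓ ≤ p := Nat.lt_succ_iff.mp (Finset.mem_range.mp hℓ)
  rw [Nat.cast_descFactorial_eq_factorial_div (by omega), show q - (p - ℓ) = q - p + ℓ by omega,
    show -(z₁ * z₂ * z₄) * z₃ = -(z₁ * z₂ * z₃ * z₄) by ring]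
  ring
end
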